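/- Let α > 1, integers n > k ≥ 1, and reals M > m with M − m ≥ k^{−(α−1)}/(α−1). Let z ∈ ℝⁿ have exactly k coordinates equal to M and the remaining n−k coordinates equal to m. Then the α-entmax threshold equals τ(z) = (α−1)·M − k^{−(α−1)}, and α-entmax(z)_i = 1/k for every coordinate with z_i = M and α-entmax(z)_i = 0 for every coordinate with z_i = m. In particular the attention on each high-value token is 1/k regardless of the total length n. -/

import Mathlib

/-!
Each coordinate of `α`-entmax is antitone in the threshold, and strictly so while it is
positive; hence the sum of the coordinates takes the value `1` at most once, and it suffices
to check that `τ₀ = (α−1)·M − k^{−(α−1)}` works. At `τ₀` each high coordinate is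
`(k^{−(α−1)})^{1/(α−1)} = 1/k`, and the gap condition `k^{−(α−1)} ≤ (α−1)(M−m)` puts every
low coordinate below the threshold.
-/

/-- The coordinate value of `α`-entmax with threshold `τ` at a logit `x`. -/
noncomputable def entmaxTerm (α τ x : ℝ) : ℝ :=
  (max ((α - 1) * x - τ) 0) ^ ((1 : ℝ) / (α - 1))

open Finset

section EntmaxTerm

variable {α τ x : ℝ}

lemma entmaxTerm_pos_iff (hα : 1 < α) : 0 < entmaxTerm α τ x ↔ τ < (α - 1) * x := by
  have hp : 0 < 1 / (α - 1) := one_div_pos.mpr (sub_pos.mpr hα)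
  unfold entmaxTerm
  constructor
  · intro h
    by_contra! hle
    rw [max_eq_right (sub_nonpos.mpr hle), Real.zero_rpow hp.ne'] at h
    exact lt_irrefl 0 h
  · intro h
    exact Real.rpow_pos_of_pos (lt_max_of_lt_left (sub_pos.mpr h)) _

lemma entmaxTerm_eq_zero_of_le (hα : 1 < α) (h : (α - 1) * x ≤ τ) : entmaxTerm α τ x = 0 :=
  le_antisymm (not_lt.mp fun hpos => (entmaxTerm_pos_iff hα).mp hpos |>.not_ge h)
    (Real.rpow_nonneg (le_max_right _ _) _)

lemma entmaxTerm_antitone_threshold (hα : 1 ≤ α) : Antitone fun τ => entmaxTerm α τ x :=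
  fun _ _ hτ => Real.rpow_le_rpow (le_max_right _ _) (max_le_max_right 0 (by linarith))
    (one_div_nonneg.mpr (sub_nonneg.mpr hα))

lemma entmaxTerm_lt_of_lt_of_pos (hα : 1 < α) {τ₁ τ₂ : ℝ} (hτ : τ₁ < τ₂)
    (hpos : 0 < entmaxTerm α τ₂ x) : entmaxTerm α τ₂ x < entmaxTerm α τ₁ x := by
  have h₂ : 0 < (α - 1) * x - τ₂ := sub_pos.mpr ((entmaxTerm_pos_iff hα).mp hpos)
  unfold entmaxTerm
  rw [max_eq_left h₂.le, max_eq_left (by linarith)]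
  exact Real.rpow_lt_rpow h₂.le (by linarith) (one_div_pos.mpr (by linarith))

lemma entmaxTerm_sub_rpow_neg (hα : 1 < α) {k : ℝ} (hk : 0 < k) :
    entmaxTerm α ((α - 1) * x - k ^ (-(α - 1))) x = 1 / k := by
  have hα1 : α - 1 ≠ 0 := (sub_pos.mpr hα).ne'
  unfold entmaxTerm
  rw [sub_sub_cancel, max_eq_left (Real.rpow_pos_of_pos hk _).le, ← Real.rpow_mul hk.le,
    neg_mul, mul_one_div_cancel hα1, Real.rpow_neg_one, one_div]

end EntmaxTerm

lemma sum_entmaxTerm_lt_of_lt {ι : Type*} [Fintype ι] {α : ℝ} (hα : 1 < α) (z : ι → ℝ)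
    {τ₁ τ₂ : ℝ} (hτ : τ₁ < τ₂) (hpos : 0 < ∑ i, entmaxTerm α τ₂ (z i)) :
    ∑ i, entmaxTerm α τ₂ (z i) < ∑ i, entmaxTerm α τ₁ (z i) := by
  obtain ⟨j, -, hj⟩ := exists_lt_of_sum_lt (s := univ) (f := fun _ => (0 : ℝ))
    (by simpa using hpos)
  exact sum_lt_sum (fun i _ => entmaxTerm_antitone_threshold hα.le hτ.le)
    ⟨j, mem_univ j, entmaxTerm_lt_of_lt_of_pos hα hτ hj⟩

lemma entmax_threshold_unique {ι : Type*} [Fintype ι] {α : ℝ} (hα : 1 < α) (z : ι → ℝ)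
    {τ₁ τ₂ : ℝ} (h₁ : ∑ i, entmaxTerm α τ₁ (z i) = 1) (h₂ : ∑ i, entmaxTerm α τ₂ (z i) = 1) :
    τ₁ = τ₂ := by
  by_contra hne
  rcases lt_or_gt_of_ne hne with hlt | hgt
  · have := sum_entmaxTerm_lt_of_lt hα z hlt (by rw [h₂]; exact one_pos)
    linarith
  · have := sum_entmaxTerm_lt_of_lt hα z hgt (by rw [h₁]; exact one_pos)
    linarith

lemma sum_comp_of_two_valued {ι : Type*} [Fintype ι] (f : ℝ → ℝ) (z : ι → ℝ) {M m : ℝ}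
    {k : ℕ} (hcard : {i | z i = M}.ncard = k) (hvals : ∀ i, z i = M ∨ z i = m) :
    ∑ i, f (z i) = k * f M + ((Fintype.card ι : ℝ) - k) * f m := by
  classical
  have hk : #(univ.filter fun i => z i = M) = k := by
    rw [← hcard, ← Set.ncard_coe_finset, coe_filter]
    simp
  have hk' : #(univ.filter fun i => z i ≠ M) = Fintype.card ι - k := by
    rw [filter_not, card_sdiff_of_subset (filter_subset _ _), hk, card_univ]
  have hk_le : k ≤ Fintype.card ι := hk ▸ card_filter_le _ _
  rw [← sum_filter_add_sum_filter_not univ fun i => z i = M,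
    sum_congr rfl fun i hi => congrArg f (mem_filter.mp hi).2,
    sum_congr rfl fun i hi => congrArg f ((hvals i).resolve_left (mem_filter.mp hi).2),
    sum_const, sum_const, hk, hk', nsmul_eq_mul, nsmul_eq_mul, Nat.cast_sub hk_le]

theorem entmax_two_level_sparse_general
    (α : ℝ) (hα : 1 < α) (n k : ℕ) (hk : 1 ≤ k)
    (M m : ℝ)
    (hgap : (k : ℝ) ^ (-(α - 1)) / (α - 1) ≤ M - m)
    (z : Fin n → ℝ)
    (hcard : {i : Fin n | z i = M}.ncard = k)
    (hvals : ∀ i, z i = M ∨ z i = m)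
    (τ : ℝ) (hτ : ∑ i, entmaxTerm α τ (z i) = 1) :
    τ = (α - 1) * M - (k : ℝ) ^ (-(α - 1)) ∧
    (∀ i, z i = M → entmaxTerm α τ (z i) = 1 / (k : ℝ)) ∧
    (∀ i, z i = m → entmaxTerm α τ (z i) = 0) := by
  have hk0 : (0 : ℝ) < k := by exact_mod_cast hk
  have hhigh := entmaxTerm_sub_rpow_neg (x := M) hα hk0
  have hlow : entmaxTerm α ((α - 1) * M - (k : ℝ) ^ (-(α - 1))) m = 0 := by
    refine entmaxTerm_eq_zero_of_le hα ?_
    have := (div_le_iff₀ (sub_pos.mpr hα)).mp hgap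
    linarith
  have hsum : ∑ i, entmaxTerm α ((α - 1) * M - (k : ℝ) ^ (-(α - 1))) (z i) = 1 := by
    rw [sum_comp_of_two_valued _ z hcard hvals, hhigh, hlow, mul_zero, add_zero,
      mul_one_div_cancel hk0.ne']
  obtain rfl := entmax_threshold_unique hα z hτ hsum
  exact ⟨rfl, fun i hi => hi ▸ hhigh, fun i hi => hi ▸ hlow⟩

/-- Two-level logits in the sparse regime: if exactly `k` coordinates of `z` equal `M`,
the remaining `n − k` equal `m`, and `M − m ≥ k^{−(α−1)}/(α−1)`, then the `α`-entmax
threshold is `τ = (α−1)·M − k^{−(α−1)}`, each high-value token receives attention `1/k`,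
and each low-value token receives exactly zero attention. -/
theorem entmax_two_level_sparse
    (α : ℝ) (hα : 1 < α) (n k : ℕ) (hk : 1 ≤ k) (hkn : k < n)
    (M m : ℝ) (hMm : m < M)
    (hgap : (k : ℝ) ^ (-(α - 1)) / (α - 1) ≤ M - m)
    (z : Fin n → ℝ)
    (hcard : {i : Fin n | z i = M}.ncard = k)
    (hvals : ∀ i, z i = M ∨ z i = m)
    (τ : ℝ) (hτ : ∑ i, entmaxTerm α τ (z i) = 1) :
    τ = (α - 1) * M - (k : ℝ) ^ (-(α - 1)) ∧
    (∀ i, z i = M → entmaxTerm α τ (z i) = 1 / (k : ℝ)) ∧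
    (∀ i, z i = m → entmaxTerm α τ (z i) = 0) :=
  entmax_two_level_sparse_general α hα n k hk M m hgap z hcard hvals τ hτ
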